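/- arXiv:2002.00315 — 2 statements merged into one kernel-verified Lean document; each statement's English description precedes it below -/
import Mathlib

section
/- Fix integers K ≥ 2, T ≥ 2K and n with 1 ≤ n ≤ T, a partition C_1, …, C_κ of [K] into κ nonempty sets ('cliques'), a real η with 0 < η ≤ 1/(4κ), and set ε = max{2η, 1/T}. For t ≥ 1 define p̂_t ∈ Δ(K) by p̂_{t,i} = exp(−η·Σ_{τ=1}^{t−1} ℓ̂_{τ,i}) / Σ_{i'=1}^K exp(−η·Σ_{τ=1}^{t−1} ℓ̂_{τ,i'}), and define p_t ∈ Δ(K) by setting to zero every coordinate of p̂_t lying in a clique C_j with Σ_{i∈C_j} p̂_{t,i} ≤ ε, and renormalizing the remaining coordinates to sum to 1 (at least one clique always survives since κ·ε ≤ 1/2 < 1). Assume the loss estimates satisfy, for every t ∈ [n] and i ∈ [K]: ℓ̂_{t,i} = 0 whenever p_{t,i} = 0, and 0 ≤ ℓ̂_{t,i} ≤ 1/(Σ_{i'∈C_j} p_{t,i'}) whenever p_{t,i} > 0 and i ∈ C_j. Then Σ_{t=1}^n ⟨p_t, ℓ̂_t⟩ − min_{i∈[K]} Σ_{t=1}^n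 ℓ̂_{t,i} ≤ 2·ln K/η + 8ηκ·min_{i∈[K]} Σ_{t=1}^n ℓ̂_{t,i} + 10κ·ln(KT) + (2K/T)·min_{i∈[K]} Σ_{t=1}^n ℓ̂_{t,i}. -/
/-!
Second-order analysis of exponential weights. The total weight `W_t` satisfies
`W_{t+1} ≤ W_t (1 - η ⟨p̂_t, ℓ_t⟩ + η²/2 ⟨p̂_t, ℓ_t²⟩)`, which telescopes to the usual regret bound
with a second-moment term. Since `ℓ_{t,i} ≤ 1 / p̂_t(C_j)` on a surviving clique `C_j`, the second
moment is at most the sum over cliques of the `p̂_t`-average loss `R_{t,j}` on `C_j`. Because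
`η ℓ ≤ η / ε ≤ 1`, the clique weight shrinks by a factor `1 - η R_{t,j} / 2` in every round
(clipped cliques have zero loss and do not move), and it never falls below
`ε e^{-1-η L*}`: it only moves in rounds where it holds at least an `ε` fraction of the total
weight `W_t ≥ e^{-η L*}`. Hence `∑_t R_{t,j} ≤ (2/η)(ln K + 1 - ln ε + η L*)` for each clique.
Finally renormalising after clipping costs a factor `1 / (1 - κ ε) ≤ 1 + 2 κ ε`.
-/

open Finset Real

lemma exp_neg_le_one_sub_add_sq_div_two {x : ℝ} (hx : 0 ≤ x) :
    exp (-x) ≤ 1 - x + x ^ 2 / 2 := by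
  -- `(1 - x + x²/2) (1 + x + x²/2) = 1 + x⁴/4`
  have hpos : 0 ≤ 1 - x + x ^ 2 / 2 := by nlinarith [sq_nonneg (x - 1)]
  rw [exp_neg, inv_le_iff_one_le_mul₀ (exp_pos x)]
  nlinarith [mul_le_mul_of_nonneg_left (quadratic_le_exp_of_nonneg hx) hpos, pow_nonneg hx 4]

lemma exp_neg_le_one_sub_half {x : ℝ} (hx0 : 0 ≤ x) (hx1 : x ≤ 1) : exp (-x) ≤ 1 - x / 2 := by
  nlinarith [exp_neg_le_one_sub_add_sq_div_two hx0]

lemma Finset.sum_mul_centerMass {ι : Type*} {s : Finset ι} {w : ι → ℝ} (z : ι → ℝ)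
    (hw : ∑ i ∈ s, w i ≠ 0) :
    (∑ i ∈ s, w i) * s.centerMass w z = ∑ i ∈ s, w i * z i := by
  simp only [centerMass, smul_eq_mul, mul_inv_cancel_left₀ hw]

section WeightedExp

variable {ι : Type*} {s : Finset ι} {w g : ι → ℝ} {η : ℝ}

lemma sum_mul_exp_neg_le (hs : s.Nonempty) (hw : ∀ i ∈ s, 0 < w i) (hη : 0 ≤ η)
    (hg : ∀ i ∈ s, 0 ≤ g i) :
    ∑ i ∈ s, w i * exp (-(η * g i)) ≤
      (∑ i ∈ s, w i) * (1 - η * s.centerMass w g + η ^ 2 / 2 * s.centerMass w (g · ^ 2)) := by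
  have hW : ∑ i ∈ s, w i ≠ 0 := (sum_pos hw hs).ne'
  calc ∑ i ∈ s, w i * exp (-(η * g i))
      ≤ ∑ i ∈ s, w i * (1 - η * g i + (η * g i) ^ 2 / 2) := by
        gcongr with i hi
        · exact (hw i hi).le
        · exact exp_neg_le_one_sub_add_sq_div_two (mul_nonneg hη (hg i hi))
    _ = (∑ i ∈ s, w i) * (1 - η * s.centerMass w g + η ^ 2 / 2 * s.centerMass w (g · ^ 2)) := by
        rw [mul_add, mul_sub, mul_one, mul_left_comm, sum_mul_centerMass _ hW, mul_left_comm,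
          sum_mul_centerMass _ hW, mul_sum, mul_sum, ← sum_sub_distrib, ← sum_add_distrib]
        exact sum_congr rfl fun i _ => by ring

lemma sum_mul_exp_neg_le_of_le_one (hs : s.Nonempty) (hw : ∀ i ∈ s, 0 < w i)
    (hg0 : ∀ i ∈ s, 0 ≤ η * g i) (hg1 : ∀ i ∈ s, η * g i ≤ 1) :
    ∑ i ∈ s, w i * exp (-(η * g i)) ≤ (∑ i ∈ s, w i) * (1 - η / 2 * s.centerMass w g) := by
  have hW : ∑ i ∈ s, w i ≠ 0 := (sum_pos hw hs).ne'
  calc ∑ i ∈ s, w i * exp (-(η * g i)) ≤ ∑ i ∈ s, w i * (1 - η * g i / 2) := by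
        gcongr with i hi
        · exact (hw i hi).le
        · exact exp_neg_le_one_sub_half (hg0 i hi) (hg1 i hi)
    _ = (∑ i ∈ s, w i) * (1 - η / 2 * s.centerMass w g) := by
        rw [mul_sub, mul_one, mul_left_comm, sum_mul_centerMass _ hW, mul_sum, ← sum_sub_distrib]
        exact sum_congr rfl fun i _ => by ring

end WeightedExp

lemma sum_le_log_sub_log_of_le_mul_one_sub {V a : ℕ → ℝ} {n : ℕ} (hV : ∀ t, 0 < V t)
    (h : ∀ t ∈ Icc 1 n, V (t + 1) ≤ V t * (1 - a t)) :
    ∑ t ∈ Icc 1 n, a t ≤ log (V 1) - log (V (n + 1)) := by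
  have hstep : ∀ t ∈ Icc 1 n, a t ≤ log (V t) - log (V (t + 1)) := by
    intro t ht
    have hlog := log_le_sub_one_of_pos (div_pos (hV (t + 1)) (hV t))
    rw [log_div (hV (t + 1)).ne' (hV t).ne'] at hlog
    have hratio : V (t + 1) / V t ≤ 1 - a t := by
      rw [div_le_iff₀ (hV t)]
      linarith [h t ht]
    linarith
  calc ∑ t ∈ Icc 1 n, a t ≤ ∑ t ∈ Icc 1 n, (log (V t) - log (V (t + 1))) := sum_le_sum hstep
    _ = log (V 1) - log (V (n + 1)) := by
        rw [← Ico_add_one_right_eq_Icc, ← neg_sub,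
          ← sum_Ico_sub (fun t => log (V t)) (by omega), ← sum_neg_distrib]
        simp only [neg_sub]

section Hedge

variable {ι : Type*} {η ε : ℝ} {ℓ : ℕ → ι → ℝ} {n t : ℕ}

noncomputable def hedgeWeight (η : ℝ) (ℓ : ℕ → ι → ℝ) (t : ℕ) (i : ι) : ℝ :=
  exp (-η * ∑ τ ∈ Icc 1 (t - 1), ℓ τ i)

noncomputable def hedgeProb [Fintype ι] (η : ℝ) (ℓ : ℕ → ι → ℝ) (t : ℕ) (i : ι) : ℝ :=
  hedgeWeight η ℓ t i / ∑ k, hedgeWeight η ℓ t k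

lemma hedgeWeight_pos (i : ι) : 0 < hedgeWeight η ℓ t i := exp_pos _

@[simp]
lemma hedgeWeight_one (i : ι) : hedgeWeight η ℓ 1 i = 1 := by simp [hedgeWeight]

lemma hedgeWeight_succ (ht : 1 ≤ t) (i : ι) :
    hedgeWeight η ℓ (t + 1) i = hedgeWeight η ℓ t i * exp (-(η * ℓ t i)) := by
  obtain ⟨t, rfl⟩ : ∃ m, t = m + 1 := ⟨t - 1, by omega⟩
  simp only [hedgeWeight, ← exp_add, Nat.add_sub_cancel, sum_Icc_succ_top (by omega : 1 ≤ t + 1)]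
  ring_nf

lemma sum_hedgeWeight_succ (ht : 1 ≤ t) (s : Finset ι) :
    ∑ i ∈ s, hedgeWeight η ℓ (t + 1) i = ∑ i ∈ s, hedgeWeight η ℓ t i * exp (-(η * ℓ t i)) :=
  sum_congr rfl fun i _ => hedgeWeight_succ ht i

lemma exp_neg_le_hedgeWeight (hη : 0 ≤ η) {i : ι} (hℓ : ∀ τ ∈ Icc 1 n, 0 ≤ ℓ τ i)
    (ht : t ≤ n + 1) : exp (-(η * ∑ τ ∈ Icc 1 n, ℓ τ i)) ≤ hedgeWeight η ℓ t i := by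
  rw [hedgeWeight, neg_mul, exp_le_exp, neg_le_neg_iff]
  exact mul_le_mul_of_nonneg_left (sum_le_sum_of_subset_of_nonneg
    (Icc_subset_Icc_right (show t - 1 ≤ n by omega)) fun τ hτ _ => hℓ τ hτ) hη

lemma sum_hedgeWeight_one (s : Finset ι) : ∑ i ∈ s, hedgeWeight η ℓ 1 i = #s := by simp

lemma sum_hedgeWeight_pos {s : Finset ι} (hs : s.Nonempty) : 0 < ∑ i ∈ s, hedgeWeight η ℓ t i :=
  sum_pos (fun i _ => hedgeWeight_pos i) hs

theorem sum_centerMass_hedgeWeight_le {s : Finset ι} (hs : s.Nonempty)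
    (hℓ0 : ∀ t ∈ Icc 1 n, ∀ i ∈ s, 0 ≤ η * ℓ t i) (hℓ1 : ∀ t ∈ Icc 1 n, ∀ i ∈ s, η * ℓ t i ≤ 1) :
    η / 2 * ∑ t ∈ Icc 1 n, s.centerMass (hedgeWeight η ℓ t) (ℓ t)
      ≤ log #s - log (∑ i ∈ s, hedgeWeight η ℓ (n + 1) i) := by
  rw [mul_sum, ← sum_hedgeWeight_one (η := η) (ℓ := ℓ)]
  refine sum_le_log_sub_log_of_le_mul_one_sub (V := fun t => ∑ k ∈ s, hedgeWeight η ℓ t k)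
    (fun _ => sum_hedgeWeight_pos hs) fun t ht => ?_
  rw [sum_hedgeWeight_succ (mem_Icc.1 ht).1]
  exact sum_mul_exp_neg_le_of_le_one hs (fun k _ => hedgeWeight_pos k) (hℓ0 t ht) (hℓ1 t ht)

lemma exp_neg_one_mul_le_sum_hedgeWeight_succ (ht : 1 ≤ t) {s : Finset ι}
    (hℓ : ∀ i ∈ s, η * ℓ t i ≤ 1) :
    exp (-1) * ∑ i ∈ s, hedgeWeight η ℓ t i ≤ ∑ i ∈ s, hedgeWeight η ℓ (t + 1) i := by
  rw [sum_hedgeWeight_succ ht, mul_sum]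
  refine sum_le_sum fun i hi => ?_
  rw [mul_comm]
  exact mul_le_mul_of_nonneg_left (exp_le_exp.2 (neg_le_neg (hℓ i hi))) (hedgeWeight_pos i).le

variable [Fintype ι]

lemma hedgeProb_nonneg (i : ι) : 0 ≤ hedgeProb η ℓ t i :=
  div_nonneg (hedgeWeight_pos i).le (sum_nonneg fun k _ => (hedgeWeight_pos k).le)

lemma hedgeWeight_le_sum (i : ι) : hedgeWeight η ℓ t i ≤ ∑ k, hedgeWeight η ℓ t k :=
  single_le_sum (fun k _ => (hedgeWeight_pos k).le) (mem_univ i)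

lemma sum_hedgeProb_mul (g : ι → ℝ) :
    ∑ i, hedgeProb η ℓ t i * g i = univ.centerMass (hedgeWeight η ℓ t) g := by
  simp only [centerMass, hedgeProb, smul_eq_mul, mul_sum]
  exact sum_congr rfl fun i _ => by ring

lemma sum_hedgeProb (s : Finset ι) :
    ∑ i ∈ s, hedgeProb η ℓ t i = (∑ i ∈ s, hedgeWeight η ℓ t i) / ∑ k, hedgeWeight η ℓ t k :=
  (sum_div _ _ _).symm

lemma sum_hedgeProb_eq_one [Nonempty ι] : ∑ i, hedgeProb η ℓ t i = 1 := by
  rw [sum_hedgeProb]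
  exact div_self (sum_hedgeWeight_pos univ_nonempty).ne'

lemma centerMass_hedgeProb [Nonempty ι] (s : Finset ι) (g : ι → ℝ) :
    s.centerMass (hedgeProb η ℓ t) g = s.centerMass (hedgeWeight η ℓ t) g := by
  have hW : ∑ k, hedgeWeight η ℓ t k ≠ 0 := (sum_hedgeWeight_pos univ_nonempty).ne'
  have : hedgeProb η ℓ t = (∑ k, hedgeWeight η ℓ t k)⁻¹ • hedgeWeight η ℓ t := by
    funext i
    simp [hedgeProb, div_eq_inv_mul]
  rw [this, centerMass_smul_left _ _ (inv_ne_zero hW)]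

theorem hedge_regret_second_order [Nonempty ι] (hη : 0 ≤ η)
    (hℓ : ∀ t ∈ Icc 1 n, ∀ i, 0 ≤ ℓ t i) (i : ι) :
    ∑ t ∈ Icc 1 n, (η * ∑ k, hedgeProb η ℓ t k * ℓ t k
        - η ^ 2 / 2 * ∑ k, hedgeProb η ℓ t k * ℓ t k ^ 2)
      ≤ log (Fintype.card ι) + η * ∑ t ∈ Icc 1 n, ℓ t i := by
  have hlast : exp (-(η * ∑ t ∈ Icc 1 n, ℓ t i)) ≤ ∑ k, hedgeWeight η ℓ (n + 1) k :=
    (exp_neg_le_hedgeWeight hη (fun τ hτ => hℓ τ hτ i) le_rfl).trans (hedgeWeight_le_sum i)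
  have hlog := log_le_log (exp_pos _) hlast
  rw [log_exp] at hlog
  simp only [sum_hedgeProb_mul]
  calc _ ≤ log (∑ k, hedgeWeight η ℓ 1 k) - log (∑ k, hedgeWeight η ℓ (n + 1) k) := by
        refine sum_le_log_sub_log_of_le_mul_one_sub (V := fun t => ∑ k, hedgeWeight η ℓ t k)
          (fun _ => sum_hedgeWeight_pos univ_nonempty) fun t ht => ?_
        rw [sum_hedgeWeight_succ (mem_Icc.1 ht).1]
        refine (sum_mul_exp_neg_le univ_nonempty (fun k _ => hedgeWeight_pos k) hη
          fun k _ => hℓ t ht k).trans_eq ?_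
        ring
    _ ≤ _ := by rw [sum_hedgeWeight_one, card_univ]; linarith

theorem mul_exp_neg_le_sum_hedgeWeight {s : Finset ι} (hs : s.Nonempty) (hη : 0 ≤ η)
    (hε0 : 0 ≤ ε) (hε1 : ε ≤ 1) {i : ι} (hℓi : ∀ t ∈ Icc 1 n, 0 ≤ ℓ t i)
    (hℓ1 : ∀ t ∈ Icc 1 n, ∀ k ∈ s, η * ℓ t k ≤ 1)
    (hsurv : ∀ t ∈ Icc 1 n, (∀ k ∈ s, ℓ t k = 0) ∨ ε ≤ ∑ k ∈ s, hedgeProb η ℓ t k) :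
    ε * exp (-1 - η * ∑ t ∈ Icc 1 n, ℓ t i) ≤ ∑ k ∈ s, hedgeWeight η ℓ (n + 1) k := by
  have hL : 0 ≤ η * ∑ t ∈ Icc 1 n, ℓ t i := mul_nonneg hη (sum_nonneg hℓi)
  suffices ∀ N ≤ n, ε * exp (-1 - η * ∑ t ∈ Icc 1 n, ℓ t i) ≤ ∑ k ∈ s, hedgeWeight η ℓ (N + 1) k
    from this n le_rfl
  intro N hN
  induction N with
  | zero =>
    have hcard : (1 : ℝ) ≤ #s := by exact_mod_cast hs.card_pos
    have hexp : exp (-1 - η * ∑ t ∈ Icc 1 n, ℓ t i) ≤ 1 := exp_le_one_iff.2 (by linarith)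
    rw [zero_add, sum_hedgeWeight_one]
    nlinarith [exp_pos (-1 - η * ∑ t ∈ Icc 1 n, ℓ t i)]
  | succ N ih =>
    have ht : N + 1 ∈ Icc 1 n := mem_Icc.2 ⟨by omega, hN⟩
    rcases hsurv _ ht with hzero | hmass
    · rw [sum_hedgeWeight_succ (by omega)]
      refine (ih (by omega)).trans_eq (sum_congr rfl fun k hk => ?_)
      rw [hzero k hk, mul_zero, neg_zero, exp_zero, mul_one]
    · have hW : exp (-(η * ∑ t ∈ Icc 1 n, ℓ t i)) ≤ ∑ k, hedgeWeight η ℓ (N + 1) k :=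
        (exp_neg_le_hedgeWeight hη hℓi (by omega)).trans (hedgeWeight_le_sum i)
      rw [sum_hedgeProb, le_div_iff₀ (sum_hedgeWeight_pos ⟨i, mem_univ i⟩)] at hmass
      calc ε * exp (-1 - η * ∑ t ∈ Icc 1 n, ℓ t i)
          = exp (-1) * (ε * exp (-(η * ∑ t ∈ Icc 1 n, ℓ t i))) := by
            rw [sub_eq_add_neg, exp_add]; ring
        _ ≤ exp (-1) * ∑ k ∈ s, hedgeWeight η ℓ (N + 1) k := by
            gcongr
            exact hmass.trans' (by gcongr)
        _ ≤ _ := exp_neg_one_mul_le_sum_hedgeWeight_succ (by omega) (hℓ1 _ ht)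

theorem sum_centerMass_hedgeWeight_le_of_survives {s : Finset ι} (hs : s.Nonempty) (hη : 0 < η)
    (hε0 : 0 < ε) (hε1 : ε ≤ 1) (hℓ0 : ∀ t ∈ Icc 1 n, ∀ k, 0 ≤ ℓ t k)
    (hℓ1 : ∀ t ∈ Icc 1 n, ∀ k ∈ s, η * ℓ t k ≤ 1)
    (hsurv : ∀ t ∈ Icc 1 n, (∀ k ∈ s, ℓ t k = 0) ∨ ε ≤ ∑ k ∈ s, hedgeProb η ℓ t k) (i : ι) :
    ∑ t ∈ Icc 1 n, s.centerMass (hedgeWeight η ℓ t) (ℓ t)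
      ≤ 2 / η * (log #s + 1 - log ε + η * ∑ t ∈ Icc 1 n, ℓ t i) := by
  have hlow := mul_exp_neg_le_sum_hedgeWeight hs hη.le hε0.le hε1 (fun t ht => hℓ0 t ht i)
    hℓ1 hsurv
  have hlog := log_le_log (by positivity) hlow
  rw [log_mul hε0.ne' (exp_pos _).ne', log_exp] at hlog
  have hpot := sum_centerMass_hedgeWeight_le hs
    (fun t ht k _ => mul_nonneg hη.le (hℓ0 t ht k)) hℓ1
  calc _ = 2 / η * (η / 2 * ∑ t ∈ Icc 1 n, s.centerMass (hedgeWeight η ℓ t) (ℓ t)) := by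
        field_simp
    _ ≤ _ := by gcongr; linarith

end Hedge

section Cliques

variable {ι J : Type*} [Fintype ι] [DecidableEq J] {cl : ι → J}

def clique (cl : ι → J) (j : J) : Finset ι := univ.filter (fun i => cl i = j)

@[simp]
lemma mem_clique {i : ι} {j : J} : i ∈ clique cl j ↔ cl i = j := by simp [clique]

lemma clique_nonempty (hcl : Function.Surjective cl) (j : J) : (clique cl j).Nonempty :=
  let ⟨i, hi⟩ := hcl j
  ⟨i, mem_clique.2 hi⟩

lemma forall_eq_zero_or_le_sum_clique {ε : ℝ} {x g : ι → ℝ}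
    (hg : ∀ i, g i ≠ 0 → ε < ∑ k ∈ clique cl (cl i), x k) (j : J) :
    (∀ k ∈ clique cl j, g k = 0) ∨ ε ≤ ∑ k ∈ clique cl j, x k := by
  by_contra! h
  obtain ⟨⟨k, hk, hne⟩, hlt⟩ := h
  have := hg k hne
  rw [mem_clique.1 hk] at this
  linarith

variable [Fintype J]

lemma sum_sum_clique (f : ι → ℝ) : ∑ j, ∑ i ∈ clique cl j, f i = ∑ i, f i :=
  sum_fiberwise univ cl f

lemma sum_mul_sq_le_sum_centerMass_clique {x g : ι → ℝ} (hx : ∀ i, 0 ≤ x i) (hg : ∀ i, 0 ≤ g i)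
    (hgx : ∀ i, g i * ∑ k ∈ clique cl (cl i), x k ≤ 1) :
    ∑ i, x i * g i ^ 2 ≤ ∑ j, (clique cl j).centerMass x g := by
  rw [← sum_sum_clique (cl := cl)]
  refine sum_le_sum fun j _ => ?_
  rcases (sum_nonneg fun k _ => hx k : 0 ≤ ∑ k ∈ clique cl j, x k).eq_or_lt with hm | hm
  · have hx0 := (sum_eq_zero_iff_of_nonneg fun k _ => hx k).1 hm.symm
    rw [sum_eq_zero fun i hi => by rw [hx0 i hi, zero_mul]]
    simp [centerMass, ← hm]
  · rw [← mul_le_mul_iff_right₀ hm, sum_mul_centerMass _ hm.ne', mul_sum]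
    refine sum_le_sum fun i hi => ?_
    have hgi := hgx i
    rw [mem_clique.1 hi] at hgi
    nlinarith [mul_nonneg (hx i) (hg i)]

end Cliques

section Clipping

variable {ι J : Type*} [Fintype ι] [DecidableEq J] {cl : ι → J} {ε : ℝ} {x g : ι → ℝ}

noncomputable def clip (ε : ℝ) (cl : ι → J) (x : ι → ℝ) (i : ι) : ℝ :=
  if ε < ∑ k ∈ clique cl (cl i), x k then x i else 0

noncomputable def clippedProb (ε : ℝ) (cl : ι → J) (x : ι → ℝ) (i : ι) : ℝ :=
  clip ε cl x i / ∑ k, clip ε cl x k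

lemma clip_nonneg (hx : ∀ i, 0 ≤ x i) (i : ι) : 0 ≤ clip ε cl x i := by
  unfold clip
  split_ifs
  exacts [hx i, le_rfl]

lemma clippedProb_nonneg (hx : ∀ i, 0 ≤ x i) (i : ι) : 0 ≤ clippedProb ε cl x i :=
  div_nonneg (clip_nonneg hx i) (sum_nonneg fun k _ => clip_nonneg hx k)

lemma sum_clique_clip (j : J) :
    ∑ k ∈ clique cl j, clip ε cl x k =
      if ε < ∑ k ∈ clique cl j, x k then ∑ k ∈ clique cl j, x k else 0 := by
  split_ifs with h
  · exact sum_congr rfl fun k hk => by rw [clip, mem_clique.1 hk, if_pos h]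
  · exact sum_eq_zero fun k hk => by rw [clip, mem_clique.1 hk, if_neg h]

lemma sum_clip_le (hx : ∀ i, 0 ≤ x i) : ∑ i, clip ε cl x i ≤ ∑ i, x i :=
  sum_le_sum fun i _ => by
    unfold clip
    split_ifs
    exacts [le_rfl, hx i]

lemma sum_sub_card_mul_le_sum_clip [Fintype J] (hε : 0 ≤ ε) :
    ∑ i, x i - Fintype.card J * ε ≤ ∑ i, clip ε cl x i := by
  rw [← sum_sum_clique (cl := cl), ← sum_sum_clique (cl := cl)]
  simp only [sum_clique_clip]
  have hclipped : ∀ j, ∑ k ∈ clique cl j, x k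
      - (if ε < ∑ k ∈ clique cl j, x k then ∑ k ∈ clique cl j, x k else 0) ≤ ε := by
    intro j
    split_ifs with h
    · linarith
    · linarith [not_lt.1 h]
  have := sum_le_sum fun j (_ : j ∈ univ) => hclipped j
  simp only [sum_sub_distrib, sum_const, card_univ, nsmul_eq_mul] at this
  linarith

lemma lt_sum_clique_of_ne_zero (hgz : ∀ i, clippedProb ε cl x i = 0 → g i = 0) {i : ι}
    (hg : g i ≠ 0) : ε < ∑ k ∈ clique cl (cl i), x k := by
  by_contra h
  exact hg (hgz i (by simp [clippedProb, clip, h]))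

lemma mul_sum_clique_le_one (hx : ∀ i, 0 ≤ x i) (hclip : ∑ i, clip ε cl x i ≤ 1)
    (hgz : ∀ i, clippedProb ε cl x i = 0 → g i = 0)
    (hgb : ∀ i, 0 < clippedProb ε cl x i →
      g i ≤ 1 / ∑ k ∈ clique cl (cl i), clippedProb ε cl x k) (i : ι) :
    g i * ∑ k ∈ clique cl (cl i), x k ≤ 1 := by
  rcases (clippedProb_nonneg (ε := ε) (cl := cl) hx i).eq_or_lt with hp | hp
  · rw [hgz i hp.symm, zero_mul]
    exact zero_le_one
  have hsurv : ε < ∑ k ∈ clique cl (cl i), x k := by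
    by_contra h
    simp [clippedProb, clip, h] at hp
  have hQ : 0 < ∑ k, clip ε cl x k :=
    (sum_nonneg fun k _ => clip_nonneg hx k).lt_of_ne fun h => by
      simp [clippedProb, ← h] at hp
  have hxi : 0 < x i := by
    rw [clippedProb, clip, if_pos hsurv] at hp
    exact (div_pos_iff_of_pos_right hQ).1 hp
  have hm : 0 < ∑ k ∈ clique cl (cl i), x k :=
    hxi.trans_le (single_le_sum (fun k _ => hx k) (mem_clique.2 rfl))
  have hgi := hgb i hp
  simp only [clippedProb] at hgi
  rw [← sum_div, sum_clique_clip, if_pos hsurv, one_div_div] at hgi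
  calc g i * ∑ k ∈ clique cl (cl i), x k ≤ ∑ k, clip ε cl x k := (le_div_iff₀ hm).1 hgi
    _ ≤ 1 := hclip

lemma sum_clippedProb_mul_le [Fintype J] (hx : ∀ i, 0 ≤ x i) (hx1 : ∑ i, x i = 1) (hε : 0 ≤ ε)
    (hJε : Fintype.card J * ε ≤ 1 / 2) (hg : ∀ i, 0 ≤ g i)
    (hgz : ∀ i, clippedProb ε cl x i = 0 → g i = 0) :
    ∑ i, clippedProb ε cl x i * g i ≤ (1 + 2 * (Fintype.card J * ε)) * ∑ i, x i * g i := by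
  have hclip : ∀ i, clip ε cl x i * g i = x i * g i := by
    intro i
    by_cases h : g i = 0
    · simp [h]
    · rw [clip, if_pos (lt_sum_clique_of_ne_zero hgz h)]
  have hQ := sum_sub_card_mul_le_sum_clip (cl := cl) (x := x) hε
  rw [hx1] at hQ
  have hS : 0 ≤ ∑ i, x i * g i := sum_nonneg fun i _ => mul_nonneg (hx i) (hg i)
  have hJ : 0 ≤ (Fintype.card J : ℝ) * ε := by positivity
  simp only [clippedProb, div_mul_eq_mul_div, ← sum_div, hclip]
  rw [div_le_iff₀ (by linarith)]
  -- `(1 + 2a) (1 - a) ≥ 1` for `0 ≤ a ≤ 1/2`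
  nlinarith [mul_le_mul_of_nonneg_left hQ
      (mul_nonneg hS (by linarith : 0 ≤ 1 + 2 * (Fintype.card J * ε))),
    mul_nonneg (mul_nonneg hS hJ) (by linarith : 0 ≤ 1 - 2 * (Fintype.card J * ε))]

end Clipping

section CliqueHedge

variable {ι J : Type*} [Fintype ι] [Nonempty ι] [Fintype J] [DecidableEq J] {cl : ι → J}
  {η ε : ℝ} {ℓ : ℕ → ι → ℝ} {n : ℕ}

theorem sum_hedgeProb_mul_sq_le_of_clique_bounded (hcl : Function.Surjective cl) (hη : 0 < η)
    (hηε : η ≤ ε) (hε1 : ε ≤ 1) (hℓ0 : ∀ t ∈ Icc 1 n, ∀ i, 0 ≤ ℓ t i)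
    (hℓb : ∀ t ∈ Icc 1 n, ∀ i, ℓ t i * ∑ k ∈ clique cl (cl i), hedgeProb η ℓ t k ≤ 1)
    (hℓz : ∀ t ∈ Icc 1 n, ∀ i, ℓ t i ≠ 0 → ε < ∑ k ∈ clique cl (cl i), hedgeProb η ℓ t k)
    (i : ι) :
    ∑ t ∈ Icc 1 n, ∑ k, hedgeProb η ℓ t k * ℓ t k ^ 2
      ≤ Fintype.card J * (2 / η *
        (log (Fintype.card ι) + 1 - log ε + η * ∑ t ∈ Icc 1 n, ℓ t i)) := by
  have hηℓ : ∀ t ∈ Icc 1 n, ∀ k, η * ℓ t k ≤ 1 := by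
    intro t ht k
    by_cases h0 : ℓ t k = 0
    · simp [h0]
    · nlinarith [hℓz t ht k h0, hℓb t ht k, hℓ0 t ht k]
  have hclique : ∀ j, ∑ t ∈ Icc 1 n, (clique cl j).centerMass (hedgeWeight η ℓ t) (ℓ t)
      ≤ 2 / η * (log (Fintype.card ι) + 1 - log ε + η * ∑ t ∈ Icc 1 n, ℓ t i) := fun j =>
    (sum_centerMass_hedgeWeight_le_of_survives (clique_nonempty hcl j) hη (hη.trans_le hηε) hε1
      hℓ0 (fun t ht k _ => hηℓ t ht k)
      (fun t ht => forall_eq_zero_or_le_sum_clique (hℓz t ht) j) i).trans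
    (by gcongr; exacts [mod_cast (clique_nonempty hcl j).card_pos, card_le_univ _])
  calc _ ≤ ∑ t ∈ Icc 1 n, ∑ j, (clique cl j).centerMass (hedgeProb η ℓ t) (ℓ t) :=
        sum_le_sum fun t ht => sum_mul_sq_le_sum_centerMass_clique
          (fun k => hedgeProb_nonneg k) (hℓ0 t ht) (hℓb t ht)
    _ = ∑ j, ∑ t ∈ Icc 1 n, (clique cl j).centerMass (hedgeWeight η ℓ t) (ℓ t) := by
        simp only [centerMass_hedgeProb]
        exact sum_comm
    _ ≤ _ := (sum_le_sum fun j _ => hclique j).trans_eq (by simp)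

theorem sum_hedgeProb_mul_le_of_clique_bounded (hcl : Function.Surjective cl) (hη : 0 < η)
    (hηε : η ≤ ε) (hε1 : ε ≤ 1) (hℓ0 : ∀ t ∈ Icc 1 n, ∀ i, 0 ≤ ℓ t i)
    (hℓb : ∀ t ∈ Icc 1 n, ∀ i, ℓ t i * ∑ k ∈ clique cl (cl i), hedgeProb η ℓ t k ≤ 1)
    (hℓz : ∀ t ∈ Icc 1 n, ∀ i, ℓ t i ≠ 0 → ε < ∑ k ∈ clique cl (cl i), hedgeProb η ℓ t k)
    (i : ι) :
    ∑ t ∈ Icc 1 n, ∑ k, hedgeProb η ℓ t k * ℓ t k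
      ≤ log (Fintype.card ι) / η + ∑ t ∈ Icc 1 n, ℓ t i
        + Fintype.card J * (log (Fintype.card ι) + 1 - log ε + η * ∑ t ∈ Icc 1 n, ℓ t i) := by
  set X := log (Fintype.card ι) + 1 - log ε + η * ∑ t ∈ Icc 1 n, ℓ t i
  have hsecond : η ^ 2 / 2 * ∑ t ∈ Icc 1 n, ∑ k, hedgeProb η ℓ t k * ℓ t k ^ 2
      ≤ η * (Fintype.card J * X) :=
    calc _ ≤ η ^ 2 / 2 * (Fintype.card J * (2 / η * X)) := by
          gcongr
          exact sum_hedgeProb_mul_sq_le_of_clique_bounded hcl hη hηε hε1 hℓ0 hℓb hℓz i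
      _ = _ := by field_simp
  have hhedge := hedge_regret_second_order hη.le hℓ0 i
  rw [sum_sub_distrib, ← mul_sum, ← mul_sum] at hhedge
  have hexpand : η * (log (Fintype.card ι) / η + ∑ t ∈ Icc 1 n, ℓ t i + Fintype.card J * X)
      = log (Fintype.card ι) + η * ∑ t ∈ Icc 1 n, ℓ t i + η * (Fintype.card J * X) := by
    field_simp
  rw [← mul_le_mul_iff_right₀ hη]
  linarith

theorem sum_clippedProb_mul_le_of_clique_bounded (hcl : Function.Surjective cl) (hη : 0 < η)
    (hηε : η ≤ ε) (hJε : Fintype.card J * ε ≤ 1 / 2) (hℓ0 : ∀ t ∈ Icc 1 n, ∀ i, 0 ≤ ℓ t i)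
    (hℓz : ∀ t ∈ Icc 1 n, ∀ i, clippedProb ε cl (hedgeProb η ℓ t) i = 0 → ℓ t i = 0)
    (hℓb : ∀ t ∈ Icc 1 n, ∀ i, 0 < clippedProb ε cl (hedgeProb η ℓ t) i →
      ℓ t i ≤ 1 / ∑ k ∈ clique cl (cl i), clippedProb ε cl (hedgeProb η ℓ t) k)
    (i : ι) :
    ∑ t ∈ Icc 1 n, ∑ k, clippedProb ε cl (hedgeProb η ℓ t) k * ℓ t k
      ≤ (1 + 2 * (Fintype.card J * ε)) * (log (Fintype.card ι) / η + ∑ t ∈ Icc 1 n, ℓ t i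
        + Fintype.card J * (log (Fintype.card ι) + 1 - log ε + η * ∑ t ∈ Icc 1 n, ℓ t i)) := by
  have hε : 0 ≤ ε := hη.le.trans hηε
  have hJ : (1 : ℝ) ≤ Fintype.card J := by
    exact_mod_cast Fintype.card_pos_iff.2 ⟨cl (Classical.arbitrary ι)⟩
  have hhedge := sum_hedgeProb_mul_le_of_clique_bounded hcl hη hηε (by nlinarith) hℓ0
    (fun t ht => mul_sum_clique_le_one (fun k => hedgeProb_nonneg k)
      ((sum_clip_le fun k => hedgeProb_nonneg k).trans_eq sum_hedgeProb_eq_one) (hℓz t ht)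
      (hℓb t ht))
    (fun t ht i => lt_sum_clique_of_ne_zero (hℓz t ht)) i
  refine le_trans ?_ (mul_le_mul_of_nonneg_left hhedge (by positivity))
  rw [mul_sum]
  exact sum_le_sum fun t ht => sum_clippedProb_mul_le (fun k => hedgeProb_nonneg k)
    sum_hedgeProb_eq_one hε hJε (hℓ0 t ht) (hℓz t ht)

end CliqueHedge

lemma natCast_mul_max_le_half {K T κ : ℕ} {η : ℝ} (hκK : κ ≤ K) (hT : 2 * K ≤ T)
    (hη : η ≤ 1 / (4 * (κ : ℝ))) : (κ : ℝ) * max (2 * η) (1 / (T : ℝ)) ≤ 1 / 2 := by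
  rcases Nat.eq_zero_or_pos κ with rfl | hκ
  · norm_num
  have hκ' : (0 : ℝ) < κ := by exact_mod_cast hκ
  have hT' : (2 : ℝ) * K ≤ T := by exact_mod_cast hT
  have hκK' : (κ : ℝ) ≤ K := by exact_mod_cast hκK
  rw [mul_max_of_nonneg _ _ hκ'.le]
  apply max_le
  · rw [le_div_iff₀ (by positivity)] at hη
    linarith
  · rw [mul_one_div, div_le_iff₀ (by linarith)]
    linarith

lemma epoch_regret_le_of_hedge_bound {K T κ : ℕ} {η ε L P : ℝ} (hK : 2 ≤ K) (hT : 2 * K ≤ T)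
    (hκK : κ ≤ K) (hκ : 1 ≤ κ) (hη0 : 0 < η) (hη : η ≤ 1 / (4 * (κ : ℝ)))
    (hε : ε = max (2 * η) (1 / (T : ℝ))) (hL : 0 ≤ L)
    (hP : P ≤ (1 + 2 * (κ * ε)) * (log K / η + L + κ * (log K + 1 - log ε + η * L))) :
    P - L ≤ 2 * log K / η + 8 * η * κ * L + 10 * κ * log ((K : ℝ) * T)
      + (2 * (K : ℝ) / T) * L := by
  have hκε := natCast_mul_max_le_half hκK hT hη
  rw [← hε] at hκε
  have hK' : (2 : ℝ) ≤ K := by exact_mod_cast hK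
  have hT' : (2 : ℝ) * K ≤ T := by exact_mod_cast hT
  have hκ' : (1 : ℝ) ≤ κ := by exact_mod_cast hκ
  have hκK' : (κ : ℝ) ≤ K := by exact_mod_cast hκK
  have hT0 : (0 : ℝ) < T := by linarith
  have h2η : 2 * η ≤ ε := hε ▸ le_max_left _ _
  have hTε : 1 / (T : ℝ) ≤ ε := hε ▸ le_max_right _ _
  have hT1 : 0 < 1 / (T : ℝ) := by positivity
  have hεsum : ε ≤ 2 * η + 1 / T := hε ▸ max_le (by linarith) (by linarith)
  have hε0 : 0 < ε := by linarith
  have hlogε : -log ε ≤ log T := by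
    have := log_le_log (by positivity) hTε
    rw [one_div, log_inv] at this
    linarith
  have hlogε1 : log ε ≤ 0 := log_nonpos hε0.le (by nlinarith)
  have hlogK : 0 ≤ log K := log_nonneg (by linarith)
  have hlogT : log 2 ≤ log T := log_le_log (by norm_num) (by linarith)
  have hlogKT : log ((K : ℝ) * T) = log K + log T := log_mul (by positivity) hT0.ne'
  set E := log K / η + κ * (log K + 1 - log ε) + η * κ * L
  have hE : 0 ≤ E := by
    have : 0 ≤ log K + 1 - log ε := by linarith
    positivity
  have hmain : P - L ≤ 2 * E + 2 * (κ * ε) * L := by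
    have hEL : log K / η + L + κ * (log K + 1 - log ε + η * L) = E + L := by simp only [E]; ring
    rw [hEL] at hP
    nlinarith
  have hεL : 2 * (κ * ε) * L ≤ 4 * η * κ * L + 2 * K / T * L := by
    have : 2 * (κ * ε) ≤ 4 * η * κ + 2 * K / T :=
      calc 2 * (κ * ε) ≤ 2 * (κ * (2 * η + 1 / T)) := by gcongr
        _ = 4 * η * κ + 2 * κ / T := by ring
        _ ≤ 4 * η * κ + 2 * K / T := by gcongr
    linarith [mul_le_mul_of_nonneg_right this hL]
  have hlog : 2 * κ * (log K + 1 - log ε) ≤ 10 * κ * log ((K : ℝ) * T) := by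
    rw [hlogKT]
    nlinarith [log_two_gt_d9]
  simp only [E] at hmain
  have : 2 * (log K / η) = 2 * log K / η := by ring
  linarith [mul_nonneg (mul_nonneg hη0.le (by positivity : (0 : ℝ) ≤ κ)) hL]

theorem stmt11_general (K T n κ : ℕ) (hK : 2 ≤ K) (hT : 2 * K ≤ T)
    (hκ : 1 ≤ κ)
    (cl : Fin K → Fin κ) (hcl : Function.Surjective cl)
    (η ε : ℝ) (hη0 : 0 < η) (hη : η ≤ 1 / (4 * (κ : ℝ)))
    (hε : ε = max (2 * η) (1 / (T : ℝ)))
    (ℓ phat q p : ℕ → Fin K → ℝ)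
    (hphat : ∀ t ∈ Finset.Icc 1 n, ∀ i, phat t i =
      Real.exp (-η * ∑ τ ∈ Finset.Icc 1 (t - 1), ℓ τ i)
        / ∑ i', Real.exp (-η * ∑ τ ∈ Finset.Icc 1 (t - 1), ℓ τ i'))
    (hq : ∀ t ∈ Finset.Icc 1 n, ∀ i, q t i =
      if ε < ∑ i' ∈ univ.filter (fun i' => cl i' = cl i), phat t i'
      then phat t i else 0)
    (hp : ∀ t ∈ Finset.Icc 1 n, ∀ i, p t i = q t i / ∑ i', q t i')
    (hℓ0 : ∀ t ∈ Finset.Icc 1 n, ∀ i, 0 ≤ ℓ t i)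
    (hℓz : ∀ t ∈ Finset.Icc 1 n, ∀ i, p t i = 0 → ℓ t i = 0)
    (hℓb : ∀ t ∈ Finset.Icc 1 n, ∀ i, 0 < p t i →
      ℓ t i ≤ 1 / ∑ i' ∈ univ.filter (fun i' => cl i' = cl i), p t i') :
    ∑ t ∈ Finset.Icc 1 n, ∑ i, p t i * ℓ t i
        - (⨅ i : Fin K, ∑ t ∈ Finset.Icc 1 n, ℓ t i) ≤
      2 * Real.log K / η
        + 8 * η * (κ : ℝ) * (⨅ i : Fin K, ∑ t ∈ Finset.Icc 1 n, ℓ t i)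
        + 10 * (κ : ℝ) * Real.log ((K : ℝ) * T)
        + (2 * (K : ℝ) / T) * (⨅ i : Fin K, ∑ t ∈ Finset.Icc 1 n, ℓ t i) := by
  have : Nonempty (Fin K) := ⟨⟨0, by omega⟩⟩
  obtain ⟨i₀, hi₀⟩ := exists_eq_ciInf_of_finite (f := fun i : Fin K => ∑ t ∈ Icc 1 n, ℓ t i)
  rw [← hi₀]
  have hκK : κ ≤ K := by simpa using Fintype.card_le_of_surjective cl hcl
  have hκε := natCast_mul_max_le_half hκK hT hη
  rw [← hε] at hκε
  have hp' : ∀ t ∈ Icc 1 n, p t = clippedProb ε cl (hedgeProb η ℓ t) := fun t ht => by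
    funext i
    rw [hp t ht, show q t = clip ε cl (phat t) from funext (hq t ht), funext (hphat t ht)]
    rfl
  have h2η : 2 * η ≤ ε := hε ▸ le_max_left _ _
  have hbound := sum_clippedProb_mul_le_of_clique_bounded hcl hη0 (by linarith : η ≤ ε)
    (by simpa using hκε) hℓ0
    (fun t ht i h => hℓz t ht i (by rwa [hp' t ht]))
    (fun t ht i h => by
      have := hℓb t ht i (by rwa [hp' t ht])
      rwa [hp' t ht] at this) i₀
  have hsum : ∑ t ∈ Icc 1 n, ∑ i, p t i * ℓ t i
      = ∑ t ∈ Icc 1 n, ∑ i, clippedProb ε cl (hedgeProb η ℓ t) i * ℓ t i :=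
    sum_congr rfl fun t ht => by rw [hp' t ht]
  rw [← hsum, Fintype.card_fin, Fintype.card_fin] at hbound
  exact epoch_regret_le_of_hedge_bound hK hT hκK hκ hη0 hη hε
    (sum_nonneg fun t ht => hℓ0 t ht i₀) hbound

/-- Single-epoch guarantee for clipped exponential weights over a clique
partition (Lemma 6, 'epoch', in Appendix D of the paper). -/
theorem stmt11 (K T n κ : ℕ) (hK : 2 ≤ K) (hT : 2 * K ≤ T)
    (hn1 : 1 ≤ n) (hnT : n ≤ T) (hκ : 1 ≤ κ)
    (cl : Fin K → Fin κ) (hcl : Function.Surjective cl)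
    (η ε : ℝ) (hη0 : 0 < η) (hη : η ≤ 1 / (4 * (κ : ℝ)))
    (hε : ε = max (2 * η) (1 / (T : ℝ)))
    (ℓ phat q p : ℕ → Fin K → ℝ)
    (hphat : ∀ t ∈ Finset.Icc 1 n, ∀ i, phat t i =
      Real.exp (-η * ∑ τ ∈ Finset.Icc 1 (t - 1), ℓ τ i)
        / ∑ i', Real.exp (-η * ∑ τ ∈ Finset.Icc 1 (t - 1), ℓ τ i'))
    (hq : ∀ t ∈ Finset.Icc 1 n, ∀ i, q t i =
      if ε < ∑ i' ∈ univ.filter (fun i' => cl i' = cl i), phat t i'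
      then phat t i else 0)
    (hp : ∀ t ∈ Finset.Icc 1 n, ∀ i, p t i = q t i / ∑ i', q t i')
    (hℓ0 : ∀ t ∈ Finset.Icc 1 n, ∀ i, 0 ≤ ℓ t i)
    (hℓz : ∀ t ∈ Finset.Icc 1 n, ∀ i, p t i = 0 → ℓ t i = 0)
    (hℓb : ∀ t ∈ Finset.Icc 1 n, ∀ i, 0 < p t i →
      ℓ t i ≤ 1 / ∑ i' ∈ univ.filter (fun i' => cl i' = cl i), p t i') :
    ∑ t ∈ Finset.Icc 1 n, ∑ i, p t i * ℓ t i
        - (⨅ i : Fin K, ∑ t ∈ Finset.Icc 1 n, ℓ t i) ≤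
      2 * Real.log K / η
        + 8 * η * (κ : ℝ) * (⨅ i : Fin K, ∑ t ∈ Finset.Icc 1 n, ℓ t i)
        + 10 * (κ : ℝ) * Real.log ((K : ℝ) * T)
        + (2 * (K : ℝ) / T) * (⨅ i : Fin K, ∑ t ∈ Finset.Icc 1 n, ℓ t i) :=
  stmt11_general K T n κ hK hT hκ cl hcl η ε hη0 hη hε ℓ phat q p hphat hq hp hℓ0 hℓz hℓb
end

section
/- Fix K ≥ 1, a subset S ⊆ [K] with complement S̄ = [K]\S, reals η with 0 < η ≤ 1/5 and η̄ > 0, and a convex set Ω ⊆ Δ(K) all of whose elements have strictly positive coordinates. Let ψ(p) = (1/η)·Σ_{i∈S} ln(1/p_i) + (1/η̄)·Σ_{i∈S̄} p_i ln p_i. Let p_t ∈ Ω, let ℓ̂ ∈ ℝ^K be nonnegative and satisfy p_{t,i}·ℓ̂_i ≤ 1 for i ∈ S and η̄·ℓ̂_i ≤ 1/5 for i ∈ S̄, define the correction vector a ∈ ℝ^K by a_i = 2η·p_{t,i}·ℓ̂_i² for i ∈ S and a_i = 2η̄·ℓ̂_i² for i ∈ S̄, and let p_{t+1} be a minimizer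 over Ω of p ↦ ⟨p, ℓ̂ + a⟩ + D_ψ(p, p_t). Then for every u ∈ Ω: ⟨p_t − u, ℓ̂⟩ ≤ D_ψ(u, p_t) − D_ψ(u, p_{t+1}) + ⟨u, a⟩. -/
/-!
By first-order optimality of `p_{t+1}` on the convex set `Ω` and the three-point identity of
Bregman divergences, one mirror-descent step satisfies
`⟨p_{t+1} - u, ℓ̂ + a⟩ ≤ D(u, p_t) - D(u, p_{t+1}) - D(p_{t+1}, p_t)`.
It then suffices that the correction terms pay for the stability term:
`⟨p_t - p_{t+1}, ℓ̂⟩ - ⟨p_{t+1}, a⟩ ≤ D(p_{t+1}, p_t)`. Since `ψ` is separable this is a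
one-dimensional inequality in each coordinate, which follows from `log z ≤ z - 1` at a suitably
rescaled point, using `c ≤ log (1 + c + c²)` and `exp (-(c + 2c²)) ≤ 1 - c` for `0 ≤ c ≤ 1/5`.
-/

open Finset Real

noncomputable def breg {K : ℕ} (ψ : (Fin K → ℝ) → ℝ) (x y : Fin K → ℝ) : ℝ :=
  ψ x - ψ y - fderiv ℝ ψ y (x - y)

theorem le_log_one_add_add_sq {c : ℝ} (hc : |c| ≤ 1) : c ≤ log (1 + c + c ^ 2) := by
  have hpos : 0 < 1 + c + c ^ 2 := by nlinarith [sq_nonneg (c + 1 / 2)]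
  rw [le_log_iff_exp_le hpos]
  linarith [(abs_le.mp (abs_exp_sub_one_sub_id_le hc)).2]

theorem exp_neg_add_two_mul_sq_le_one_sub {c : ℝ} (hc0 : 0 ≤ c) (hc : c ≤ 1 / 5) :
    exp (-(c + 2 * c ^ 2)) ≤ 1 - c := by
  have habs : |-(c + 2 * c ^ 2)| ≤ 1 := by
    rw [abs_neg, abs_of_nonneg (by positivity)]; nlinarith
  have hsq : (c + 2 * c ^ 2) ^ 2 ≤ 2 * c ^ 2 := by
    nlinarith [mul_nonneg (sq_nonneg c) (by nlinarith : (0 : ℝ) ≤ 1 - 4 * c - 4 * c ^ 2)]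
  linarith [(abs_le.mp (abs_exp_sub_one_sub_id_le habs)).2]

theorem mul_one_sub_sub_sq_mul_le_neg_log {s c : ℝ} (hs : 0 < s) (hc : |c| ≤ 1) :
    c * (1 - s) - c ^ 2 * s ≤ -log s + s - 1 := by
  have hM : 0 < 1 + c + c ^ 2 := by nlinarith [sq_nonneg (c + 1 / 2)]
  have hlog := log_le_sub_one_of_pos (mul_pos hM hs)
  rw [log_mul hM.ne' hs.ne'] at hlog
  linarith [le_log_one_add_add_sq hc]

theorem mul_one_sub_sub_two_mul_sq_mul_le_mul_log {r c : ℝ} (hr : 0 < r) (hc0 : 0 ≤ c)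
    (hc : c ≤ 1 / 5) : c * (1 - r) - 2 * c ^ 2 * r ≤ r * log r - r + 1 := by
  set t := c + 2 * c ^ 2
  have hrescale : r * exp (-log r - t) = exp (-t) := by
    rw [sub_eq_add_neg, exp_add, exp_neg, exp_log hr]; field_simp
  have hexp := mul_le_mul_of_nonneg_left (add_one_le_exp (-log r - t)) hr.le
  linarith [exp_neg_add_two_mul_sq_le_one_sub hc0 hc]

theorem sub_mul_sub_le_log_barrier_bregman {x y l η : ℝ} (hx : 0 < x) (hy : 0 < y) (hl : 0 ≤ l)
    (hyl : y * l ≤ 1) (hη0 : 0 < η) (hη : η ≤ 1 / 5) :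
    (y - x) * l - x * (2 * η * y * l ^ 2) ≤ (log (1 / x) - log (1 / y) + (x - y) / y) / η := by
  set c := η * y * l
  have hc0 : 0 ≤ c := by positivity
  have hc : c ≤ 1 := by nlinarith
  have key := mul_one_sub_sub_sq_mul_le_neg_log (div_pos hx hy) (abs_le.mpr ⟨by linarith, hc⟩)
  have hlhs : ((y - x) * l - x * (2 * η * y * l ^ 2)) * η =
      c * (1 - x / y) - 2 * c ^ 2 * (x / y) := by
    field_simp; ring
  have hrhs : log (1 / x) - log (1 / y) + (x - y) / y = -log (x / y) + x / y - 1 := by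
    rw [log_div hx.ne' hy.ne', one_div, one_div, log_inv, log_inv]; field_simp; ring
  rw [le_div_iff₀ hη0, hlhs, hrhs]
  nlinarith [mul_nonneg (sq_nonneg c) (div_pos hx hy).le]

theorem sub_mul_sub_le_entropy_bregman {x y l η : ℝ} (hx : 0 < x) (hy : 0 < y) (hl : 0 ≤ l)
    (hη0 : 0 < η) (hηl : η * l ≤ 1 / 5) :
    (y - x) * l - x * (2 * η * l ^ 2) ≤
      (x * log x - y * log y - (log y + 1) * (x - y)) / η := by
  have key := mul_le_mul_of_nonneg_left
    (mul_one_sub_sub_two_mul_sq_mul_le_mul_log (div_pos hx hy) (by positivity) hηl) hy.le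
  have hlhs : ((y - x) * l - x * (2 * η * l ^ 2)) * η =
      y * (η * l * (1 - x / y) - 2 * (η * l) ^ 2 * (x / y)) := by
    field_simp
  have hrhs : x * log x - y * log y - (log y + 1) * (x - y) =
      y * (x / y * log (x / y) - x / y + 1) := by
    rw [log_div hx.ne' hy.ne']; field_simp; ring
  rw [le_div_iff₀ hη0, hlhs, hrhs]
  exact key

theorem hasFDerivAt_sum_apply {ι : Type*} [Fintype ι] {φ : ι → ℝ → ℝ} {φ' : ι → ℝ}
    {y : ι → ℝ} (hφ : ∀ i, HasDerivAt (φ i) (φ' i) (y i)) :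
    HasFDerivAt (fun p : ι → ℝ => ∑ i, φ i (p i))
      (∑ i, φ' i • ContinuousLinearMap.proj (R := ℝ) (φ := fun _ : ι => ℝ) i) y :=
  HasFDerivAt.fun_sum fun i _ =>
    (hφ i).comp_hasFDerivAt y
      (ContinuousLinearMap.proj (R := ℝ) (φ := fun _ : ι => ℝ) i).hasFDerivAt

theorem breg_sum_apply {K : ℕ} {φ : Fin K → ℝ → ℝ} {φ' : Fin K → ℝ} {y : Fin K → ℝ}
    (hφ : ∀ i, HasDerivAt (φ i) (φ' i) (y i)) (x : Fin K → ℝ) :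
    breg (fun p => ∑ i, φ i (p i)) x y =
      ∑ i, (φ i (x i) - φ i (y i) - φ' i * (x i - y i)) := by
  rw [breg, (hasFDerivAt_sum_apply hφ).fderiv]
  simp [sum_sub_distrib]

theorem breg_sub_breg {K : ℕ} (ψ : (Fin K → ℝ) → ℝ) (u x y : Fin K → ℝ) :
    breg ψ u y - breg ψ u x =
      breg ψ x y + (fderiv ℝ ψ x (u - x) - fderiv ℝ ψ y (u - x)) := by
  have hsplit : u - y = (u - x) + (x - y) := by abel
  simp only [breg]
  rw [hsplit, map_add]
  ring

theorem sum_sub_mul_le_breg_of_isMinOn {K : ℕ} {ψ : (Fin K → ℝ) → ℝ}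
    {Ω : Set (Fin K → ℝ)} (hΩ : Convex ℝ Ω) {L x y u : Fin K → ℝ}
    (hψ : DifferentiableAt ℝ ψ x) (hmin : IsMinOn (fun q => ∑ i, q i * L i + breg ψ q y) Ω x)
    (hx : x ∈ Ω) (hu : u ∈ Ω) :
    ∑ i, (x i - u i) * L i ≤ breg ψ u y - breg ψ u x - breg ψ x y := by
  have hlin := hasFDerivAt_sum_apply (φ := fun i t => t * L i) (y := x)
    fun i => hasDerivAt_mul_const (L i)
  have hbreg : HasFDerivAt (fun q => breg ψ q y) (fderiv ℝ ψ x - fderiv ℝ ψ y) x := by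
    simp only [breg, map_sub]
    exact ((hψ.hasFDerivAt.sub_const _).sub ((fderiv ℝ ψ y).hasFDerivAt.sub_const _))
  have hopt := hmin.localize.hasFDerivWithinAt_nonneg (hlin.add hbreg).hasFDerivWithinAt
    (sub_mem_posTangentConeAt_of_segment_subset (hΩ.segment_subset hx hu))
  have hsum : ∑ i, (x i - u i) * L i = -∑ i, L i * (u - x) i := by
    rw [← sum_neg_distrib]
    exact sum_congr rfl fun i _ => by simp only [Pi.sub_apply]; ring
  simp only [add_apply, sub_apply, FunLike.coe_sum, Finset.sum_apply, smul_apply,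
    ContinuousLinearMap.proj_apply, smul_eq_mul] at hopt
  linarith [breg_sub_breg ψ u x y]

noncomputable def hybridReg {K : ℕ} (S : Finset (Fin K)) (η ηb : ℝ) (i : Fin K) :
    ℝ → ℝ :=
  if i ∈ S then fun x => 1 / η * log (1 / x) else fun x => 1 / ηb * (x * log x)

theorem hybridReg_sum_eq {K : ℕ} (S : Finset (Fin K)) (η ηb : ℝ) :
    (fun p : Fin K → ℝ =>
        1 / η * ∑ i ∈ S, log (1 / p i) + 1 / ηb * ∑ i ∈ Sᶜ, p i * log (p i)) =
      fun p => ∑ i, hybridReg S η ηb i (p i) := by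
  funext p
  rw [← sum_add_sum_compl S, mul_sum, mul_sum]
  congr 1 <;> refine sum_congr rfl fun i hi => ?_
  · simp [hybridReg, hi]
  · simp [hybridReg, mem_compl.mp hi]

theorem hasDerivAt_hybridReg {K : ℕ} (S : Finset (Fin K)) (η ηb : ℝ) (i : Fin K) {x : ℝ}
    (hx : 0 < x) :
    HasDerivAt (hybridReg S η ηb i)
      (if i ∈ S then 1 / η * -x⁻¹ else 1 / ηb * (log x + 1)) x := by
  by_cases hi : i ∈ S
  · have hlog_inv : (fun x : ℝ => 1 / η * log (1 / x)) = fun x => 1 / η * -log x := by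
      funext x; rw [one_div x, log_inv]
    simp only [hybridReg, hi, if_true, hlog_inv]
    exact ((hasDerivAt_log hx.ne').neg).const_mul _
  · simp only [hybridReg, hi, if_false]
    exact (hasDerivAt_mul_log hx.ne').const_mul _

theorem sum_sub_mul_sub_mul_le_breg_hybridReg {K : ℕ} {S : Finset (Fin K)} {η ηb : ℝ}
    (hη0 : 0 < η) (hη : η ≤ 1 / 5) (hηb : 0 < ηb) {x y ℓ a : Fin K → ℝ}
    (hx : ∀ i, 0 < x i) (hy : ∀ i, 0 < y i) (hℓ0 : ∀ i, 0 ≤ ℓ i)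
    (hℓS : ∀ i ∈ S, y i * ℓ i ≤ 1) (hℓSc : ∀ i ∉ S, ηb * ℓ i ≤ 1 / 5)
    (ha : ∀ i, a i = if i ∈ S then 2 * η * y i * ℓ i ^ 2 else 2 * ηb * ℓ i ^ 2) :
    ∑ i, ((y i - x i) * ℓ i - x i * a i) ≤
      breg (fun p => ∑ i, hybridReg S η ηb i (p i)) x y := by
  rw [breg_sum_apply fun i => hasDerivAt_hybridReg S η ηb i (hy i)]
  refine sum_le_sum fun i _ => ?_
  by_cases hi : i ∈ S
  · simp only [hybridReg, ha i, hi, if_true]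
    refine (sub_mul_sub_le_log_barrier_bregman (hx i) (hy i) (hℓ0 i) (hℓS i hi) hη0
      hη).trans_eq ?_
    ring
  · simp only [hybridReg, ha i, hi, if_false]
    refine (sub_mul_sub_le_entropy_bregman (hx i) (hy i) (hℓ0 i) hηb (hℓSc i hi)).trans_eq ?_
    ring

theorem stmt12_general (K : ℕ) (S : Finset (Fin K))
    (η ηb : ℝ) (hη0 : 0 < η) (hη : η ≤ 1 / 5) (hηb : 0 < ηb)
    (Ω : Set (Fin K → ℝ)) (hΩconv : Convex ℝ Ω)
    (hΩpos : ∀ p ∈ Ω, ∀ i, 0 < p i)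
    (ψ : (Fin K → ℝ) → ℝ)
    (hψ : ψ = fun p => (1 / η) * ∑ i ∈ S, Real.log (1 / p i)
      + (1 / ηb) * ∑ i ∈ Sᶜ, p i * Real.log (p i))
    (pt : Fin K → ℝ) (hpt : pt ∈ Ω)
    (ℓ : Fin K → ℝ) (hℓ0 : ∀ i, 0 ≤ ℓ i)
    (hℓS : ∀ i ∈ S, pt i * ℓ i ≤ 1)
    (hℓSc : ∀ i ∉ S, ηb * ℓ i ≤ 1 / 5)
    (a : Fin K → ℝ)
    (ha : ∀ i, a i = if i ∈ S then 2 * η * pt i * ℓ i ^ 2 else 2 * ηb * ℓ i ^ 2)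
    (pt1 : Fin K → ℝ) (hpt1 : pt1 ∈ Ω)
    (hmin : ∀ q ∈ Ω, (∑ i, pt1 i * (ℓ i + a i)) + breg ψ pt1 pt
      ≤ (∑ i, q i * (ℓ i + a i)) + breg ψ q pt) :
    ∀ u ∈ Ω,
      ∑ i, (pt i - u i) * ℓ i ≤
        breg ψ u pt - breg ψ u pt1 + ∑ i, u i * a i := by
  intro u hu
  subst hψ
  rw [hybridReg_sum_eq] at hmin ⊢
  have hdiff := (hasFDerivAt_sum_apply
    fun i => hasDerivAt_hybridReg S η ηb i (hΩpos pt1 hpt1 i)).differentiableAt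
  have hstep := sum_sub_mul_le_breg_of_isMinOn hΩconv (L := fun i => ℓ i + a i) hdiff
    (isMinOn_iff.mpr hmin) hpt1 hu
  have hstab := sum_sub_mul_sub_mul_le_breg_hybridReg hη0 hη hηb (hΩpos pt1 hpt1)
    (hΩpos pt hpt) hℓ0 hℓS hℓSc ha
  have hsum : ∑ i, (pt1 i - u i) * (ℓ i + a i) + ∑ i, ((pt i - pt1 i) * ℓ i - pt1 i * a i) =
      ∑ i, (pt i - u i) * ℓ i - ∑ i, u i * a i := by
    rw [← sum_add_distrib, ← sum_sub_distrib]
    exact sum_congr rfl fun i _ => by ring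
  linarith

/-- Lemma 2 ('lemadahome') of the paper: one step of OMD with correction terms
under the hybrid log-barrier plus negative-entropy regularizer. -/
theorem stmt12 (K : ℕ) (hK : 1 ≤ K) (S : Finset (Fin K))
    (η ηb : ℝ) (hη0 : 0 < η) (hη : η ≤ 1 / 5) (hηb : 0 < ηb)
    (Ω : Set (Fin K → ℝ)) (hΩconv : Convex ℝ Ω) (hΩsub : Ω ⊆ stdSimplex ℝ (Fin K))
    (hΩpos : ∀ p ∈ Ω, ∀ i, 0 < p i)
    (ψ : (Fin K → ℝ) → ℝ)
    (hψ : ψ = fun p => (1 / η) * ∑ i ∈ S, Real.log (1 / p i)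
      + (1 / ηb) * ∑ i ∈ Sᶜ, p i * Real.log (p i))
    (pt : Fin K → ℝ) (hpt : pt ∈ Ω)
    (ℓ : Fin K → ℝ) (hℓ0 : ∀ i, 0 ≤ ℓ i)
    (hℓS : ∀ i ∈ S, pt i * ℓ i ≤ 1)
    (hℓSc : ∀ i ∉ S, ηb * ℓ i ≤ 1 / 5)
    (a : Fin K → ℝ)
    (ha : ∀ i, a i = if i ∈ S then 2 * η * pt i * ℓ i ^ 2 else 2 * ηb * ℓ i ^ 2)
    (pt1 : Fin K → ℝ) (hpt1 : pt1 ∈ Ω)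
    (hmin : ∀ q ∈ Ω, (∑ i, pt1 i * (ℓ i + a i)) + breg ψ pt1 pt
      ≤ (∑ i, q i * (ℓ i + a i)) + breg ψ q pt) :
    ∀ u ∈ Ω,
      ∑ i, (pt i - u i) * ℓ i ≤
        breg ψ u pt - breg ψ u pt1 + ∑ i, u i * a i :=
  stmt12_general K S η ηb hη0 hη hηb Ω hΩconv hΩpos ψ hψ pt hpt ℓ hℓ0 hℓS hℓSc a ha pt1 hpt1 hmin
end
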